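/- arXiv:2410.02504 — 2 statements merged into one kernel-verified Lean document; each statement's English description precedes it below -/
import Mathlib

section
/- Let (X_t) be a martingale difference sequence with respect to a filtration (F_t), with |X_t| ≤ R almost surely. Then for any δ ∈ (0,1) and η ∈ (0, 1/R], with probability at least 1−δ, for all t ≥ 1: ∑_{s=1}^t X_s ≤ (e−2)·η·∑_{s=1}^t E[X_s² | F_{s−1}] + (1/η)·log(1/δ). -/
/-!
For `x ≤ 1` one has `exp x ≤ 1 + x + (e - 2) x²`. Applied to `x = η X_t` and conditioned on
`F_{t-1}`, the martingale-difference property kills the linear term, so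
`E[exp (η X_t) | F_{t-1}] ≤ 1 + (e - 2) η² E[X_t² | F_{t-1}] ≤ exp ((e - 2) η² E[X_t² | F_{t-1}])`.
Hence `G_t = exp (η S_t - (e - 2) η² V_t)`, with `S_t` the partial sums and `V_t` the sum of the
conditional second moments, is a positive supermartingale with `G_0 = 1`. By Ville's maximal
inequality the probability that `G_t ≥ 1/δ` for some `t` is at most `δ`; off that event, taking
logarithms gives the bound for all `t` at once.
-/

open Real MeasureTheory Finset

theorem Real.exp_le_one_add_add_sq_div_two_of_nonpos {x : ℝ} (hx : x ≤ 0) :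
    exp x ≤ 1 + x + x ^ 2 / 2 := by
  have hcubic : 1 - x + x ^ 2 / 2 - x ^ 3 / 6 ≤ exp (-x) := by
    have := sum_le_exp_of_nonneg (neg_nonneg.2 hx) 4
    norm_num [sum_range_succ, Nat.factorial] at this
    linarith
  -- `(1 + x + x²/2) (1 - x + x²/2 - x³/6) = 1 - x³/6 + x⁴/12 - x⁵/12 ≥ 1` for `x ≤ 0`
  have hinv : exp x * exp (-x) = 1 := by rw [← exp_add, add_neg_cancel, exp_zero]
  nlinarith [exp_pos x, mul_nonneg (sq_nonneg x) (neg_nonneg.2 hx), pow_two_nonneg (x ^ 2)]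

theorem Real.exp_le_one_add_add_mul_sq_of_nonneg_of_le_one {x : ℝ} (h0 : 0 ≤ x) (h1 : x ≤ 1) :
    exp x ≤ 1 + x + (exp 1 - 2) * x ^ 2 := by
  have hsum : HasSum (fun n => (x ^ n - x ^ 2) / n.factorial) (exp x - x ^ 2 * exp 1) := by
    simp only [sub_div, exp_eq_exp_ℝ]
    refine (NormedSpace.expSeries_div_hasSum_exp x).sub ?_
    simpa [div_eq_mul_inv] using (NormedSpace.expSeries_div_hasSum_exp (1 : ℝ)).mul_left (x ^ 2)
  have htail := ((hasSum_nat_add_iff' 2).2 hsum).nonpos fun n => by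
    have : x ^ (n + 2) ≤ x ^ 2 := pow_le_pow_of_le_one h0 h1 (by omega)
    exact div_nonpos_of_nonpos_of_nonneg (by linarith) (by positivity)
  norm_num [sum_range_succ] at htail
  linarith

theorem Real.exp_le_one_add_add_mul_sq_of_le_one {x : ℝ} (hx : x ≤ 1) :
    exp x ≤ 1 + x + (exp 1 - 2) * x ^ 2 := by
  rcases le_total x 0 with hx0 | hx0
  · nlinarith [exp_le_one_add_add_sq_div_two_of_nonpos hx0, exp_one_gt_d9, sq_nonneg x]
  · exact exp_le_one_add_add_mul_sq_of_nonneg_of_le_one hx0 hx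

namespace MeasureTheory

theorem integrable_exp_of_ae_le {Ω : Type*} {m₀ : MeasurableSpace Ω} {μ : Measure Ω}
    [IsFiniteMeasure μ] {Z : Ω → ℝ} (hZ : AEStronglyMeasurable Z μ) {C : ℝ}
    (hZC : ∀ᵐ ω ∂μ, Z ω ≤ C) : Integrable (fun ω => exp (Z ω)) μ :=
  .of_bound (continuous_exp.comp_aestronglyMeasurable hZ) (exp C) <| hZC.mono fun ω h => by
    simpa [abs_of_pos (exp_pos _)] using h

theorem condExp_exp_le_exp_mul_condExp_sq {Ω : Type*} {m m₀ : MeasurableSpace Ω}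
    {μ : Measure Ω} [IsFiniteMeasure μ] (hm : m ≤ m₀) {Z : Ω → ℝ}
    (hZ : ∀ᵐ ω ∂μ, Z ω ≤ 1) (hZint : Integrable Z μ) (hZ2int : Integrable (Z ^ 2) μ)
    (hmean : μ[Z | m] =ᵐ[μ] 0) :
    μ[fun ω => exp (Z ω) | m] ≤ᵐ[μ] fun ω => exp ((exp 1 - 2) * μ[Z ^ 2 | m] ω) := by
  set c := exp 1 - 2
  have hquad : μ[(fun _ => (1 : ℝ)) + Z + c • Z ^ 2 | m]
      =ᵐ[μ] (fun _ => (1 : ℝ)) + μ[Z | m] + c • μ[Z ^ 2 | m] := by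
    filter_upwards [condExp_add ((integrable_const 1).add hZint) (hZ2int.smul c) m,
      condExp_add (integrable_const 1) hZint m, condExp_smul c (Z ^ 2) m] with ω h₁ h₂ h₃
    simp only [Pi.add_apply] at h₁ h₂ ⊢
    rw [h₁, h₂, h₃, condExp_const hm]
  filter_upwards [condExp_mono (integrable_exp_of_ae_le hZint.aestronglyMeasurable hZ) ((integrable_const 1).add hZint |>.add (hZ2int.smul c))
      (hZ.mono fun ω h => exp_le_one_add_add_mul_sq_of_le_one h), hquad, hmean]
    with ω hmono hq h0
  simp only [Pi.add_apply, Pi.smul_apply, Pi.zero_apply, smul_eq_mul] at hmono hq h0 ⊢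
  rw [hq, h0] at hmono
  linarith [add_one_le_exp (c * μ[Z ^ 2 | m] ω)]

theorem one_sub_le_toReal_measure_of_measure_compl_le {Ω : Type*} {m₀ : MeasurableSpace Ω}
    {μ : Measure Ω} [IsProbabilityMeasure μ] {s : Set Ω} {δ : ℝ} (hδ : 0 ≤ δ)
    (hs : μ sᶜ ≤ ENNReal.ofReal δ) : 1 - δ ≤ (μ s).toReal := by
  have hcover : 1 ≤ μ s + ENNReal.ofReal δ := by
    simpa using (measure_univ_le_add_compl s (μ := μ)).trans (by gcongr)
  have := ENNReal.toReal_mono (by finiteness) hcover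
  rw [ENNReal.toReal_add (by finiteness) ENNReal.ofReal_ne_top, ENNReal.toReal_ofReal hδ] at this
  simpa using this

section Ville

variable {Ω : Type*} {m₀ : MeasurableSpace Ω} {μ : Measure Ω} [IsFiniteMeasure μ]
  {ℱ : Filtration ℕ m₀} {f : ℕ → Ω → ℝ}

theorem Supermartingale.integral_stoppedValue_le_integral_zero (hf : Supermartingale f ℱ μ)
    {τ : Ω → WithTop ℕ} (hτ : IsStoppingTime ℱ τ) {N : ℕ} (hτN : ∀ ω, τ ω ≤ N) :
    ∫ ω, stoppedValue f τ ω ∂μ ≤ ∫ ω, f 0 ω ∂μ := by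
  have := hf.neg.expected_stoppedValue_mono (isStoppingTime_const ℱ 0) hτ
    (fun _ => zero_le) hτN
  change ∫ ω, -f 0 ω ∂μ ≤ ∫ ω, -stoppedValue f τ ω ∂μ at this
  rwa [integral_neg, integral_neg, neg_le_neg_iff] at this

theorem Supermartingale.mul_measureReal_exists_le_ge_le_integral (hf : Supermartingale f ℱ μ)
    (hnonneg : ∀ n ω, 0 ≤ f n ω) {ε : ℝ} (hε : 0 ≤ ε) (n : ℕ) :
    ε * μ.real {ω | ∃ k ≤ n, ε ≤ f k ω} ≤ ∫ ω, f 0 ω ∂μ := by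
  set τ : Ω → WithTop ℕ := fun ω => (hittingBtwn f {y | ε ≤ y} 0 n ω : ℕ)
  have hτ : IsStoppingTime ℱ τ :=
    hf.stronglyAdapted.adapted.isStoppingTime_hittingBtwn measurableSet_Ici
  have hτn : ∀ ω, τ ω ≤ n := fun ω => WithTop.coe_le_coe.2 (hittingBtwn_le ω)
  have hsub : {ω | ∃ k ≤ n, ε ≤ f k ω} ⊆ {ω | ε ≤ stoppedValue f τ ω} :=
    fun ω ⟨k, hkn, hk⟩ => stoppedValue_hittingBtwn_mem ⟨k, ⟨k.zero_le, hkn⟩, hk⟩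
  calc ε * μ.real {ω | ∃ k ≤ n, ε ≤ f k ω}
      ≤ ε * μ.real {ω | ε ≤ stoppedValue f τ ω} := by gcongr; finiteness
    _ ≤ ∫ ω, stoppedValue f τ ω ∂μ :=
      mul_meas_ge_le_integral_of_nonneg (.of_forall fun ω => hnonneg _ ω)
        (integrable_stoppedValue ℕ hτ hf.integrable hτn) ε
    _ ≤ ∫ ω, f 0 ω ∂μ := hf.integral_stoppedValue_le_integral_zero hτ hτn

/-- Ville's maximal inequality. -/
theorem Supermartingale.measure_exists_ge_le (hf : Supermartingale f ℱ μ)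
    (hnonneg : ∀ n ω, 0 ≤ f n ω) {ε : ℝ} (hε : 0 < ε) :
    μ {ω | ∃ k, ε ≤ f k ω} ≤ ENNReal.ofReal ((∫ ω, f 0 ω ∂μ) / ε) := by
  have hunion : {ω | ∃ k, ε ≤ f k ω} = ⋃ n, {ω | ∃ k ≤ n, ε ≤ f k ω} := by
    ext ω
    simp only [Set.mem_ofPred_eq, Set.mem_iUnion]
    exact ⟨fun ⟨k, hk⟩ => ⟨k, k, le_rfl, hk⟩, fun ⟨_, k, _, hk⟩ => ⟨k, hk⟩⟩
  have hmono : Monotone fun n => {ω | ∃ k ≤ n, ε ≤ f k ω} :=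
    fun _ _ hab _ ⟨k, hk, h⟩ => ⟨k, hk.trans hab, h⟩
  rw [hunion, hmono.directed_le.measure_iUnion]
  refine iSup_le fun n => ?_
  rw [← ofReal_measureReal]
  exact ENNReal.ofReal_le_ofReal
    ((le_div_iff₀' hε).2 (hf.mul_measureReal_exists_le_ge_le_integral hnonneg hε.le n))

end Ville

end MeasureTheory

section ExpProcess

variable {Ω : Type*} {m₀ : MeasurableSpace Ω} (μ : Measure Ω) (ℱ : Filtration ℕ m₀)
  (X : ℕ → Ω → ℝ)

noncomputable def partialSum (t : ℕ) (ω : Ω) : ℝ := ∑ s ∈ Icc 1 t, X s ω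

noncomputable def condSqSum (t : ℕ) (ω : Ω) : ℝ := ∑ s ∈ Icc 1 t, μ[X s ^ 2 | ℱ (s - 1)] ω

noncomputable def expProcess (η : ℝ) (t : ℕ) (ω : Ω) : ℝ :=
  exp (η * partialSum X t ω - (exp 1 - 2) * η ^ 2 * condSqSum μ ℱ X t ω)

variable {μ ℱ X}

theorem partialSum_succ (t : ℕ) (ω : Ω) :
    partialSum X (t + 1) ω = partialSum X t ω + X (t + 1) ω :=
  sum_Icc_succ_top (by omega) _

theorem condSqSum_succ (t : ℕ) (ω : Ω) :
    condSqSum μ ℱ X (t + 1) ω = condSqSum μ ℱ X t ω + μ[X (t + 1) ^ 2 | ℱ t] ω :=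
  sum_Icc_succ_top (by omega) _

theorem expProcess_succ (η : ℝ) (t : ℕ) (ω : Ω) :
    expProcess μ ℱ X η (t + 1) ω = expProcess μ ℱ X η t ω
      * exp (-((exp 1 - 2) * η ^ 2 * μ[X (t + 1) ^ 2 | ℱ t] ω)) * exp (η * X (t + 1) ω) := by
  simp only [expProcess, partialSum_succ, condSqSum_succ, ← exp_add]
  ring_nf

theorem expProcess_zero (η : ℝ) (ω : Ω) : expProcess μ ℱ X η 0 ω = 1 := by
  simp [expProcess, partialSum, condSqSum]

theorem stronglyMeasurable_partialSum (hX : Adapted ℱ X) (t : ℕ) :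
    StronglyMeasurable[ℱ t] (partialSum X t) :=
  Finset.stronglyMeasurable_fun_sum _ fun s hs =>
    ((hX s).mono (ℱ.mono (mem_Icc.1 hs).2) le_rfl).stronglyMeasurable

theorem stronglyMeasurable_condSqSum (t : ℕ) :
    StronglyMeasurable[ℱ (t - 1)] (condSqSum μ ℱ X t) :=
  Finset.stronglyMeasurable_fun_sum _ fun s hs =>
    stronglyMeasurable_condExp.mono (ℱ.mono (by have := (mem_Icc.1 hs).2; omega))

theorem condSqSum_nonneg (t : ℕ) : 0 ≤ᵐ[μ] condSqSum μ ℱ X t := by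
  have hterm (s : ℕ) : 0 ≤ᵐ[μ] μ[X s ^ 2 | ℱ (s - 1)] :=
    condExp_nonneg (.of_forall fun ω => sq_nonneg (X s ω))
  filter_upwards [ae_all_iff.2 hterm] with ω hω
  exact sum_nonneg fun s _ => hω s

theorem abs_partialSum_le {R : ℝ} (hbdd : ∀ s, ∀ᵐ ω ∂μ, |X s ω| ≤ R) (t : ℕ) :
    ∀ᵐ ω ∂μ, |partialSum X t ω| ≤ t * R := by
  filter_upwards [ae_all_iff.2 hbdd] with ω hω
  calc |partialSum X t ω| ≤ ∑ s ∈ Icc 1 t, |X s ω| := abs_sum_le_sum_abs _ _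
    _ ≤ ∑ s ∈ Icc 1 t, R := sum_le_sum fun s _ => hω s
    _ = t * R := by simp

theorem stronglyAdapted_expProcess (hX : Adapted ℱ X) (η : ℝ) :
    StronglyAdapted ℱ (expProcess μ ℱ X η) := fun t =>
  continuous_exp.comp_stronglyMeasurable (((stronglyMeasurable_partialSum hX t).const_mul η).sub
    ((stronglyMeasurable_condSqSum t).mono (ℱ.mono (Nat.sub_le t 1)) |>.const_mul _))

variable [IsFiniteMeasure μ]

theorem integrable_expProcess (hX : Adapted ℱ X) {R : ℝ}
    (hbdd : ∀ s, ∀ᵐ ω ∂μ, |X s ω| ≤ R) (η : ℝ) (t : ℕ) :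
    Integrable (expProcess μ ℱ X η t) μ := by
  refine .of_bound ((stronglyAdapted_expProcess hX η t).mono (ℱ.le t)).aestronglyMeasurable
    (exp (|η| * (t * R))) ?_
  filter_upwards [abs_partialSum_le hbdd t, condSqSum_nonneg (ℱ := ℱ) (X := X) t]
    with ω hS hV
  have hc : 0 ≤ exp 1 - 2 := by linarith [exp_one_gt_d9]
  rw [expProcess, norm_of_nonneg (exp_pos _).le, exp_le_exp]
  calc η * partialSum X t ω - (exp 1 - 2) * η ^ 2 * condSqSum μ ℱ X t ω
      ≤ |η| * |partialSum X t ω| := by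
        rw [← abs_mul]
        nlinarith [le_abs_self (η * partialSum X t ω), mul_nonneg (mul_nonneg hc (sq_nonneg η)) hV]
    _ ≤ |η| * (t * R) := by gcongr

theorem condExp_expProcess_succ_le (hX : Adapted ℱ X) {R η : ℝ}
    (hbdd : ∀ s, ∀ᵐ ω ∂μ, |X s ω| ≤ R) (hηR : |η| * R ≤ 1) (t : ℕ)
    (hmean : μ[X (t + 1) | ℱ t] =ᵐ[μ] 0) :
    μ[expProcess μ ℱ X η (t + 1) | ℱ t] ≤ᵐ[μ] expProcess μ ℱ X η t := by
  set c := exp 1 - 2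
  set Z : Ω → ℝ := η • X (t + 1) with hZ
  set B : Ω → ℝ := fun ω => expProcess μ ℱ X η t ω * exp (-(c * η ^ 2 * μ[X (t + 1) ^ 2 | ℱ t] ω))
  have hB : StronglyMeasurable[ℱ t] B := (stronglyAdapted_expProcess hX η t).mul
    (continuous_exp.comp_stronglyMeasurable (stronglyMeasurable_condExp.const_mul _).neg)
  have hZm : AEStronglyMeasurable Z μ :=
    (((hX (t + 1)).mono (ℱ.le _) le_rfl).const_mul η).aestronglyMeasurable
  have hZabs : ∀ᵐ ω ∂μ, |Z ω| ≤ 1 := by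
    filter_upwards [hbdd (t + 1)] with ω h
    rw [hZ, Pi.smul_apply, smul_eq_mul, abs_mul]
    exact (mul_le_mul_of_nonneg_left h (abs_nonneg η)).trans hηR
  have hZint : Integrable Z μ := .of_bound hZm 1 hZabs
  have hZ2int : Integrable (Z ^ 2) μ := .of_bound (hZm.pow 2) 1 <| hZabs.mono fun ω h => by
    simpa [abs_le] using pow_le_one₀ (abs_nonneg _) h (n := 2)
  have hZle : ∀ᵐ ω ∂μ, Z ω ≤ 1 := hZabs.mono fun ω h => (le_abs_self _).trans h
  have hZmean : μ[Z | ℱ t] =ᵐ[μ] 0 :=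
    (condExp_smul η _ _).trans (hmean.mono fun ω h => by simp [h])
  have hZ2 : μ[Z ^ 2 | ℱ t] =ᵐ[μ] η ^ 2 • μ[X (t + 1) ^ 2 | ℱ t] := by
    rw [show Z ^ 2 = η ^ 2 • X (t + 1) ^ 2 by rw [hZ, smul_pow]]
    exact condExp_smul _ _ _
  have hsplit : expProcess μ ℱ X η (t + 1) = B * fun ω => exp (Z ω) :=
    funext (expProcess_succ η t)
  have hpull : μ[B * (fun ω => exp (Z ω)) | ℱ t] =ᵐ[μ] B * μ[fun ω => exp (Z ω) | ℱ t] :=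
    condExp_mul_of_stronglyMeasurable_left hB (hsplit ▸ integrable_expProcess hX hbdd η (t + 1))
      (integrable_exp_of_ae_le hZm hZle)
  rw [hsplit]
  filter_upwards [hpull, condExp_exp_le_exp_mul_condExp_sq (ℱ.le t) hZle hZint hZ2int hZmean, hZ2]
    with ω hpull hmoment hZ2
  rw [hpull, Pi.mul_apply]
  calc B ω * μ[fun ω => exp (Z ω) | ℱ t] ω ≤ B ω * exp (c * μ[Z ^ 2 | ℱ t] ω) := by
        gcongr
        exact (mul_pos (exp_pos _) (exp_pos _)).le
    _ = expProcess μ ℱ X η t ω := by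
        rw [hZ2, Pi.smul_apply, smul_eq_mul, mul_assoc, ← exp_add, ← mul_assoc c,
          neg_add_cancel, exp_zero, mul_one]

theorem supermartingale_expProcess (hX : Adapted ℱ X) {R η : ℝ}
    (hbdd : ∀ s, ∀ᵐ ω ∂μ, |X s ω| ≤ R) (hηR : |η| * R ≤ 1)
    (hmds : ∀ t, μ[X (t + 1) | ℱ t] =ᵐ[μ] 0) : Supermartingale (expProcess μ ℱ X η) ℱ μ :=
  supermartingale_nat (stronglyAdapted_expProcess hX η) (integrable_expProcess hX hbdd η)
    fun t => condExp_expProcess_succ_le hX hbdd hηR t (hmds t)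

end ExpProcess

theorem martingale_difference_concentration_general {Ω : Type*} {m0 : MeasurableSpace Ω}
    (μ : Measure Ω) [IsProbabilityMeasure μ]
    (ℱ : Filtration ℕ m0) (X : ℕ → Ω → ℝ) (R : ℝ)
    (hadapted : Adapted ℱ X)
    (hmds : ∀ s : ℕ, 1 ≤ s → μ[X s | ℱ (s - 1)] =ᵐ[μ] 0)
    (hbdd : ∀ s : ℕ, ∀ᵐ ω ∂μ, |X s ω| ≤ R)
    (δ η : ℝ) (hδ : δ ∈ Set.Ioo (0 : ℝ) 1) (hη : η ∈ Set.Ioc (0 : ℝ) (1 / R)) :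
    (1 : ℝ) - δ ≤ (μ {ω | ∀ t : ℕ, 1 ≤ t →
      ∑ s ∈ Finset.Icc 1 t, X s ω
        ≤ (Real.exp 1 - 2) * η * ∑ s ∈ Finset.Icc 1 t, (μ[(X s) ^ 2 | ℱ (s - 1)]) ω
          + (1 / η) * Real.log (1 / δ)}).toReal := by
  obtain ⟨hδ0, -⟩ := hδ
  obtain ⟨hη0, hηR⟩ := hη
  have hηR' : |η| * R ≤ 1 := by
    rw [abs_of_pos hη0]
    exact (le_div_iff₀ (one_div_pos.1 (hη0.trans_le hηR))).1 hηR
  have hG := supermartingale_expProcess hadapted hbdd hηR' fun t => by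
    simpa using hmds (t + 1) (by omega)
  have hville := hG.measure_exists_ge_le (fun t ω => (exp_pos _).le) (one_div_pos.2 hδ0)
  simp only [expProcess_zero, integral_const, probReal_univ, smul_eq_mul, mul_one,
    one_div_one_div] at hville
  refine one_sub_le_toReal_measure_of_measure_compl_le hδ0.le ((measure_mono ?_).trans hville)
  intro ω hω
  simp only [Set.mem_compl_iff, Set.mem_ofPred_eq, not_forall, not_le] at hω
  obtain ⟨t, -, ht⟩ := hω
  refine ⟨t, ?_⟩
  unfold expProcess partialSum condSqSum
  rw [← exp_log (one_div_pos.2 hδ0), exp_le_exp]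
  have hlog : η * (1 / η * log (1 / δ)) = log (1 / δ) := by field_simp
  linarith [mul_lt_mul_of_pos_left ht hη0]

theorem martingale_difference_concentration {Ω : Type*} {m0 : MeasurableSpace Ω}
    (μ : Measure Ω) [IsProbabilityMeasure μ]
    (ℱ : Filtration ℕ m0) (X : ℕ → Ω → ℝ) (R : ℝ) (hR : 0 < R)
    (hadapted : Adapted ℱ X)
    (hmds : ∀ s : ℕ, 1 ≤ s → μ[X s | ℱ (s - 1)] =ᵐ[μ] 0)
    (hbdd : ∀ s : ℕ, ∀ᵐ ω ∂μ, |X s ω| ≤ R)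
    (δ η : ℝ) (hδ : δ ∈ Set.Ioo (0 : ℝ) 1) (hη : η ∈ Set.Ioc (0 : ℝ) (1 / R)) :
    (1 : ℝ) - δ ≤ (μ {ω | ∀ t : ℕ, 1 ≤ t →
      ∑ s ∈ Finset.Icc 1 t, X s ω
        ≤ (Real.exp 1 - 2) * η * ∑ s ∈ Finset.Icc 1 t, (μ[(X s) ^ 2 | ℱ (s - 1)]) ω
          + (1 / η) * Real.log (1 / δ)}).toReal :=
  martingale_difference_concentration_general μ ℱ X R hadapted hmds hbdd δ η hδ hη
end

section
/- Let z, z' ∈ ℝ and define α̃(z,z') = ∫₀¹ (1−v)·μ'(z + v(z'−z)) dv where μ is the logistic function. Then there exists a constant C > 1 such that α̃(z,z') ≥ μ'(z') / (C·(2 + |z−z'|)²). -/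
noncomputable def logistic (w : ℝ) : ℝ := (1 + Real.exp (-w))⁻¹

noncomputable def dlogistic (w : ℝ) : ℝ := logistic w * (1 - logistic w)

lemma one_add_exp_pos (w : ℝ) : 0 < 1 + Real.exp (-w) := by positivity

lemma dlogistic_eq (w : ℝ) :
    dlogistic w = Real.exp (-w) / (1 + Real.exp (-w)) ^ 2 := by
  have h := (one_add_exp_pos w).ne'
  unfold dlogistic logistic
  field_simp
  ring

lemma dlogistic_neg (w : ℝ) : dlogistic (-w) = dlogistic w := by
  rw [dlogistic_eq, dlogistic_eq, neg_neg]
  have ht : 0 < Real.exp (-w) := Real.exp_pos _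
  have hw : Real.exp w = (Real.exp (-w))⁻¹ := by
    rw [← Real.exp_neg, neg_neg]
  rw [hw]
  field_simp
  ring

lemma dlogistic_le_aux (w : ℝ) (hw : 0 ≤ w) : dlogistic w ≤ Real.exp (-w) := by
  rw [dlogistic_eq]
  have ht : 0 < Real.exp (-w) := Real.exp_pos _
  have h1 : (1 : ℝ) ≤ (1 + Real.exp (-w)) ^ 2 := by nlinarith
  calc Real.exp (-w) / (1 + Real.exp (-w)) ^ 2 ≤ Real.exp (-w) / 1 := by gcongr
    _ = Real.exp (-w) := by ring

lemma dlogistic_ge_aux (w : ℝ) (hw : 0 ≤ w) : Real.exp (-w) / 4 ≤ dlogistic w := by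
  rw [dlogistic_eq]
  have ht : 0 < Real.exp (-w) := Real.exp_pos _
  have ht1 : Real.exp (-w) ≤ 1 := by
    calc Real.exp (-w) ≤ Real.exp 0 := Real.exp_le_exp.mpr (by linarith)
      _ = 1 := Real.exp_zero
  have h4' : (1 + Real.exp (-w)) ^ 2 ≤ 4 := by nlinarith
  gcongr

lemma dlogistic_le (w : ℝ) : dlogistic w ≤ Real.exp (-|w|) := by
  rcases abs_cases w with ⟨h1, h2⟩ | ⟨h1, h2⟩
  · rw [h1]; exact dlogistic_le_aux w h2
  · rw [h1, ← dlogistic_neg]; exact dlogistic_le_aux (-w) (by linarith)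

lemma dlogistic_ge (w : ℝ) : Real.exp (-|w|) / 4 ≤ dlogistic w := by
  rcases abs_cases w with ⟨h1, h2⟩ | ⟨h1, h2⟩
  · rw [h1]; exact dlogistic_ge_aux w h2
  · rw [h1, ← dlogistic_neg]; exact dlogistic_ge_aux (-w) (by linarith)

lemma dlogistic_pos (w : ℝ) : 0 < dlogistic w :=
  lt_of_lt_of_le (by positivity) (dlogistic_ge w)

lemma dlogistic_continuous : Continuous dlogistic := by
  have hl : Continuous logistic := by
    apply Continuous.inv₀
    · exact continuous_const.add (Real.continuous_exp.comp continuous_neg)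
    · exact fun w => (one_add_exp_pos w).ne'
  exact hl.mul (continuous_const.sub hl)

theorem taylor_remainder_weight_lower_bound :
    ∃ C : ℝ, 1 < C ∧ ∀ z z' : ℝ,
      dlogistic z' / (C * (2 + |z - z'|) ^ 2)
        ≤ ∫ v in (0 : ℝ)..1, (1 - v) * dlogistic (z + v * (z' - z)) := by
  refine ⟨44, by norm_num, fun z z' => ?_⟩
  set f : ℝ → ℝ := fun v => (1 - v) * dlogistic (z + v * (z' - z)) with hf
  set d := |z - z'| with hd
  have hd0 : 0 ≤ d := abs_nonneg _
  set s := 2 + d with hs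
  have hs2 : (2 : ℝ) ≤ s := by linarith
  have hs0 : (0 : ℝ) < s := by linarith
  set a := 1 - 1 / s with ha
  set b := 1 - 1 / (2 * s) with hb
  have h1s : 1 / s ≤ 1 / 2 := by
    apply one_div_le_one_div_of_le <;> linarith
  have h2s : 1 / (2 * s) ≤ 1 / s := by
    apply one_div_le_one_div_of_le <;> linarith
  have h2s0 : 0 < 1 / (2 * s) := by positivity
  have ha0 : 0 ≤ a := by rw [ha]; linarith
  have hab : a ≤ b := by rw [ha, hb]; linarith
  have hb1 : b ≤ 1 := by rw [hb]; linarith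
  have hcontf : Continuous f := by
    apply (continuous_const.sub continuous_id).mul
    exact dlogistic_continuous.comp (by continuity)
  have hint : ∀ x y : ℝ, IntervalIntegrable f MeasureTheory.volume x y :=
    fun x y => hcontf.intervalIntegrable x y
  set c := dlogistic z' / (8 * Real.exp 1 * s) with hc
  have he1 : (0:ℝ) < Real.exp 1 := Real.exp_pos 1
  -- pointwise bound on [a, b]
  have key : ∀ v ∈ Set.Icc a b, c ≤ f v := by
    intro v hv
    obtain ⟨hva, hvb⟩ := hv
    have h1v : 1 / (2 * s) ≤ 1 - v := by rw [hb] at hvb; linarith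
    have h2v : 1 - v ≤ 1 / s := by rw [ha] at hva; linarith
    have h1v0 : 0 ≤ 1 - v := by linarith
    -- distance from the point to z'
    have hwz : z + v * (z' - z) = z' + (1 - v) * (z - z') := by ring
    have hdist : (1 - v) * d ≤ 1 := by
      have h := mul_le_mul_of_nonneg_right h2v hd0
      have h' : 1 / s * d ≤ 1 := by
        rw [div_mul_eq_mul_div, one_mul, div_le_one hs0]; linarith
      linarith
    have habs : |z + v * (z' - z)| ≤ |z'| + 1 := by
      rw [hwz]
      calc |z' + (1 - v) * (z - z')| ≤ |z'| + |(1 - v) * (z - z')| := abs_add_le _ _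
        _ = |z'| + (1 - v) * d := by rw [abs_mul, abs_of_nonneg h1v0]
        _ ≤ |z'| + 1 := by linarith
    have hlow : dlogistic z' / (4 * Real.exp 1) ≤ dlogistic (z + v * (z' - z)) := by
      have h1 := dlogistic_ge (z + v * (z' - z))
      have h2 : Real.exp (-(|z'| + 1)) ≤ Real.exp (-|z + v * (z' - z)|) :=
        Real.exp_le_exp.mpr (by linarith)
      have h3 : Real.exp (-(|z'| + 1)) = Real.exp (-|z'|) / Real.exp 1 := by
        rw [show -(|z'| + 1) = -|z'| + (-1) by ring, Real.exp_add, Real.exp_neg, Real.exp_neg]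
        ring
      have h4 : dlogistic z' ≤ Real.exp (-|z'|) := dlogistic_le z'
      have h5 : dlogistic z' / Real.exp 1 ≤ Real.exp (-(|z'| + 1)) := by
        rw [h3]
        gcongr
      calc dlogistic z' / (4 * Real.exp 1) = (dlogistic z' / Real.exp 1) / 4 := by ring
        _ ≤ Real.exp (-(|z'| + 1)) / 4 := by gcongr
        _ ≤ Real.exp (-|z + v * (z' - z)|) / 4 := by gcongr
        _ ≤ dlogistic (z + v * (z' - z)) := h1
    calc c = (1 / (2 * s)) * (dlogistic z' / (4 * Real.exp 1)) := by
          rw [hc, div_mul_div_comm, one_mul]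
          congr 1
          ring
      _ ≤ (1 - v) * dlogistic (z + v * (z' - z)) := by
          exact mul_le_mul h1v hlow (div_nonneg (dlogistic_pos z').le (by positivity)) h1v0
  -- integral comparison on [a,b]
  have hmid : (b - a) * c ≤ ∫ v in a..b, f v := by
    have h := intervalIntegral.integral_mono_on hab
      (intervalIntegrable_const (c := c)) (hint a b) key
    rwa [intervalIntegral.integral_const, smul_eq_mul] at h
  -- nonnegativity of side pieces
  have hnn : ∀ v ∈ Set.Icc (0:ℝ) 1, 0 ≤ f v := by
    intro v hv
    exact mul_nonneg (by linarith [hv.2]) (dlogistic_pos _).le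
  have hside1 : 0 ≤ ∫ v in (0:ℝ)..a, f v := by
    apply intervalIntegral.integral_nonneg ha0
    intro u hu
    exact hnn u ⟨hu.1, le_trans hu.2 (le_trans hab hb1)⟩
  have hside2 : 0 ≤ ∫ v in b..(1:ℝ), f v := by
    apply intervalIntegral.integral_nonneg hb1
    intro u hu
    exact hnn u ⟨le_trans (le_trans ha0 hab) hu.1, hu.2⟩
  have hsplit : ∫ v in (0:ℝ)..1, f v
      = ((∫ v in (0:ℝ)..a, f v) + ∫ v in a..b, f v) + ∫ v in b..(1:ℝ), f v := by
    rw [intervalIntegral.integral_add_adjacent_intervals (hint 0 a) (hint a b),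
      intervalIntegral.integral_add_adjacent_intervals (hint 0 b) (hint b 1)]
  have hsne : s ≠ 0 := hs0.ne'
  have hba : b - a = 1 / (2 * s) := by
    rw [ha, hb]
    field_simp
    ring
  have hexp : Real.exp 1 < 2.7182818286 := Real.exp_one_lt_d9
  calc dlogistic z' / (44 * s ^ 2)
      ≤ dlogistic z' / (16 * Real.exp 1 * s ^ 2) := by
        refine div_le_div_of_nonneg_left (dlogistic_pos z').le ?_ ?_
        · exact mul_pos (by positivity) (pow_pos hs0 2)
        · nlinarith
    _ = (b - a) * c := by
        rw [hba, hc, div_mul_div_comm, one_mul]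
        congr 1
        ring
    _ ≤ ∫ v in a..b, f v := hmid
    _ ≤ ∫ v in (0:ℝ)..1, f v := by rw [hsplit]; linarith
end
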